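/- Let ω, λ be real numbers, let k be a positive natural number, set ρ = kω + ω/2 - λ, and for y > 0 set g(y) = y^{-iω/2} · Σ_{n=1}^∞ (-1)^{n+1} (n·y)^{-iω/2} (n·y)^{-1/2 + iρ}. Then for every real x > 0, the series x^{iω/2} · Σ_{m=1}^∞ (-1)^{m+1} m^{-1} (x/m)^{iω/2} · g(x/m) converges (as the limit of its partial sums) and its sum equals E_k · x^{-1/2 + iρ}, where E_k = |(1 - 2^{1/2 - i(kω - λ)}) · ζ(1/2 + i(λ - kω))|² is a nonnegative real number; that is, x^{-1/2+iρ} is an eigenfunction of H₋ with real nonnegative eigenvalue E_k. -/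

import Mathlib

/-!
With `t = kω - λ` and the Dirichlet eta function `η(s) = (1 - 2^{1-s}) ζ(s)`, the operator `A(ω)`
sends `y^{-1/2+iρ}` to `η(1/2 - it) · y^{-iω/2 - (1/2 - it)}`, and `A†(ω)` then multiplies by
`η(1/2 + it)` and restores the power `x^{-1/2+iρ}`: in both cases the sum over the dilations is an
alternating Dirichlet series at a point of the critical line. There the two eta values are complex
conjugate, so the eigenvalue is `|η(1/2 - it)|² = E_k`.

The alternating series converges to `η(s)` for `0 < Re s`, `s ≠ 1`: grouping consecutive terms
gives a series dominated by `|s| n^{-Re s - 1}`, hence holomorphic on the half-plane, and it agrees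
with `(1 - 2^{1-s}) ζ(s)` for `Re s > 1`.
-/

open Filter Finset Complex
open scoped ComplexConjugate Topology

theorem tendsto_of_tendsto_even_of_tendsto_odd {α : Type*} {l : Filter α} {f : ℕ → α}
    (he : Tendsto (fun n => f (2 * n)) atTop l) (ho : Tendsto (fun n => f (2 * n + 1)) atTop l) :
    Tendsto f atTop l := by
  intro U hU
  obtain ⟨a, ha⟩ := mem_atTop_sets.1 (he hU)
  obtain ⟨b, hb⟩ := mem_atTop_sets.1 (ho hU)
  refine mem_atTop_sets.2 ⟨2 * max a b + 1, fun n hn => ?_⟩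
  obtain ⟨m, rfl | rfl⟩ := Nat.even_or_odd' n
  exacts [ha m (by omega), hb m (by omega)]

theorem sum_range_two_mul_neg_one_pow_mul {R : Type*} [Ring R] (a : ℕ → R) (N : ℕ) :
    ∑ j ∈ range (2 * N), (-1) ^ j * a j = ∑ n ∈ range N, (a (2 * n) - a (2 * n + 1)) := by
  induction N with
  | zero => simp
  | succ N ih =>
    rw [mul_add, mul_one, sum_range_succ, sum_range_succ, sum_range_succ, ih, pow_succ, pow_mul]
    simp only [neg_one_sq, one_pow, one_mul, mul_neg_one, neg_one_mul, sub_eq_add_neg, add_assoc]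

theorem tendsto_sum_range_neg_one_pow_mul_of_hasSum {R : Type*} [Ring R] [TopologicalSpace R]
    [IsTopologicalRing R] {a : ℕ → R} {L : R} (ha : Tendsto a atTop (𝓝 0))
    (h : HasSum (fun n => a (2 * n) - a (2 * n + 1)) L) :
    Tendsto (fun N => ∑ n ∈ range N, (-1) ^ n * a n) atTop (𝓝 L) := by
  have heven : Tendsto (fun N => ∑ n ∈ range (2 * N), (-1) ^ n * a n) atTop (𝓝 L) := by
    simpa only [sum_range_two_mul_neg_one_pow_mul] using h.tendsto_sum_nat
  refine tendsto_of_tendsto_even_of_tendsto_odd heven ?_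
  have hlast : Tendsto (fun N => a (2 * N)) atTop (𝓝 0) :=
    ha.comp (tendsto_id.const_mul_atTop' two_pos)
  simpa only [sum_range_succ, pow_mul, neg_one_sq, one_pow, one_mul, add_zero] using
    heven.add hlast

theorem norm_ofReal_cpow_sub_ofReal_cpow_le {a b : ℝ} (ha : 0 < a) (hab : a ≤ b) {c : ℂ}
    (hc : c.re ≤ 1) : ‖(b : ℂ) ^ c - (a : ℂ) ^ c‖ ≤ ‖c‖ * a ^ (c.re - 1) * (b - a) := by
  have hderiv : ∀ t ∈ Set.Icc a b, HasDerivWithinAt (fun t : ℝ => (t : ℂ) ^ c)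
      (c * (t : ℂ) ^ (c - 1)) (Set.Icc a b) t := fun t ht =>
    ((hasStrictDerivAt_cpow_const (ofReal_mem_slitPlane.2 (ha.trans_le ht.1))).hasDerivAt
      |>.comp_ofReal).hasDerivWithinAt
  have hbound : ∀ t ∈ Set.Icc a b, ‖c * (t : ℂ) ^ (c - 1)‖ ≤ ‖c‖ * a ^ (c.re - 1) := by
    intro t ht
    rw [norm_mul, norm_cpow_eq_rpow_re_of_pos (ha.trans_le ht.1), sub_re, one_re]
    exact mul_le_mul_of_nonneg_left (Real.rpow_le_rpow_of_nonpos ha ht.1 (by linarith))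
      (norm_nonneg c)
  simpa [Real.norm_of_nonneg (sub_nonneg.2 hab)] using
    (convex_Icc a b).norm_image_sub_le_of_norm_hasDerivWithin_le hderiv hbound
      (Set.left_mem_Icc.2 hab) (Set.right_mem_Icc.2 hab)

/-- Since Mathlib's `riemannZeta 1` is a finite junk value, `dirichletEta 1 = 0`, not `log 2`. -/
noncomputable def dirichletEta (s : ℂ) : ℂ := (1 - 2 ^ (1 - s)) * riemannZeta s

noncomputable def etaPair (s : ℂ) (n : ℕ) : ℂ :=
  ((2 * n + 1 : ℕ) : ℂ) ^ (-s) - ((2 * n + 2 : ℕ) : ℂ) ^ (-s)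

theorem norm_etaPair_le {s : ℂ} (hs : 0 ≤ s.re) (n : ℕ) :
    ‖etaPair s n‖ ≤ ‖s‖ * ((n : ℝ) + 1) ^ (-s.re - 1) := by
  have h := norm_ofReal_cpow_sub_ofReal_cpow_le (a := 2 * n + 1) (b := 2 * n + 2)
    (by positivity) (by linarith) (c := -s) (by rw [neg_re]; linarith)
  rw [etaPair, ← norm_neg, neg_sub]
  push_cast at h ⊢
  refine h.trans ?_
  rw [norm_neg, neg_re, show (2 * n + 2 - (2 * n + 1) : ℝ) = 1 by ring, mul_one]
  exact mul_le_mul_of_nonneg_left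
    (Real.rpow_le_rpow_of_nonpos (by positivity) (by linarith) (by linarith)) (norm_nonneg s)

theorem summable_add_one_rpow_neg_sub_one {σ : ℝ} (hσ : 0 < σ) :
    Summable fun n : ℕ => ((n : ℝ) + 1) ^ (-σ - 1) := by
  simpa using (summable_nat_add_iff 1).2 (Real.summable_nat_rpow.2 (by linarith : -σ - 1 < -1))

theorem summable_etaPair {s : ℂ} (hs : 0 < s.re) : Summable (etaPair s) :=
  .of_norm_bounded ((summable_add_one_rpow_neg_sub_one hs).mul_left ‖s‖) (norm_etaPair_le hs.le)

theorem differentiableOn_tsum_etaPair :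
    DifferentiableOn ℂ (fun s => ∑' n, etaPair s n) {s | 0 < s.re} := by
  intro s₀ (hs₀ : 0 < s₀.re)
  set U : Set ℂ := {s | s₀.re / 2 < s.re} ∩ Metric.ball 0 (‖s₀‖ + 1)
  have hU : IsOpen U := (isOpen_lt continuous_const continuous_re).inter Metric.isOpen_ball
  have hs₀U : s₀ ∈ U := ⟨show s₀.re / 2 < s₀.re by linarith, by simp⟩
  have hpair : ∀ n, DifferentiableOn ℂ (fun s => etaPair s n) U := fun n =>
    ((differentiable_neg.const_cpow (Or.inl (Nat.cast_ne_zero.2 (by omega)))).sub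
      (differentiable_neg.const_cpow (Or.inl (Nat.cast_ne_zero.2 (by omega))))).differentiableOn
  have hbound : ∀ n, ∀ s ∈ U, ‖etaPair s n‖ ≤ (‖s₀‖ + 1) * ((n : ℝ) + 1) ^ (-(s₀.re / 2) - 1) := by
    rintro n s ⟨hre : s₀.re / 2 < s.re, hnorm⟩
    rw [mem_ball_zero_iff] at hnorm
    refine (norm_etaPair_le (by linarith) n).trans (mul_le_mul hnorm.le ?_ (by positivity)
      (by positivity))
    exact Real.rpow_le_rpow_of_exponent_le (by linarith [n.cast_nonneg (α := ℝ)]) (by linarith)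
  exact (differentiableOn_tsum_of_summable_norm
    ((summable_add_one_rpow_neg_sub_one (half_pos hs₀)).mul_left _) hpair hU hbound
    |>.differentiableAt (hU.mem_nhds hs₀U)).differentiableWithinAt

theorem tsum_etaPair_of_one_lt_re {s : ℂ} (hs : 1 < s.re) : ∑' n, etaPair s n = dirichletEta s := by
  set a : ℕ → ℂ := fun n => ((n + 1 : ℕ) : ℂ) ^ (-s)
  have ha : Summable a := by
    simpa [a, Complex.cpow_neg] using
      (summable_nat_add_iff 1).2 (Complex.summable_one_div_nat_cpow.2 hs)
  have hzeta : riemannZeta s = ∑' n, a n := by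
    simp [a, zeta_eq_tsum_one_div_nat_add_one_cpow hs, Complex.cpow_neg]
  have ha_odd : ∀ k, a (2 * k + 1) = 2 ^ (-s) * a k := fun k => by
    have h := natCast_mul_natCast_cpow 2 (k + 1) (-s)
    simp only [a, show 2 * k + 1 + 1 = 2 * (k + 1) by ring]
    push_cast at h ⊢
    exact h
  have hsum_even : Summable fun k => a (2 * k) :=
    ha.comp_injective (mul_right_injective₀ two_ne_zero)
  have hsum_odd : Summable fun k => a (2 * k + 1) :=
    ha.comp_injective fun i j h => by simpa using h
  have hsplit := tsum_even_add_odd hsum_even hsum_odd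
  have hpair : ∑' n, etaPair s n = ∑' k, a (2 * k) - ∑' k, a (2 * k + 1) := by
    rw [← hsum_even.tsum_sub hsum_odd]
    rfl
  rw [funext ha_odd, tsum_mul_left, ← hzeta] at hsplit
  rw [hpair, funext ha_odd, tsum_mul_left, ← hzeta, dirichletEta,
    sub_eq_add_neg (1 : ℂ) s, cpow_add _ _ two_ne_zero, cpow_one]
  linear_combination hsplit

theorem tsum_etaPair {s : ℂ} (hs : 0 < s.re) (hs1 : s ≠ 1) :
    ∑' n, etaPair s n = dirichletEta s := by
  -- `(s - 1) ζ(s)` extends to the entire `riemannZeta₁`, so both sides times `s - 1` are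
  -- holomorphic on the half-plane, where the identity theorem applies.
  set U : Set ℂ := {s | 0 < s.re}
  have hU : IsOpen U := isOpen_lt continuous_const continuous_re
  have hF : AnalyticOnNhd ℂ (fun s => (s - 1) * ∑' n, etaPair s n) U :=
    ((differentiableOn_id.sub_const 1).mul differentiableOn_tsum_etaPair).analyticOnNhd hU
  have hG : AnalyticOnNhd ℂ (fun s => (1 - 2 ^ (1 - s)) * riemannZeta₁ s) U :=
    (((differentiable_const_cpow_of_neZero 2).comp (differentiable_id.const_sub 1)).const_sub 1
      |>.mul differentiable_riemannZeta₁).differentiableOn.analyticOnNhd hU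
  have hFG : (fun s => (s - 1) * ∑' n, etaPair s n) =ᶠ[𝓝 2]
      fun s => (1 - 2 ^ (1 - s)) * riemannZeta₁ s := by
    filter_upwards [(isOpen_lt continuous_const continuous_re).mem_nhds
      (show (1 : ℝ) < (2 : ℂ).re by norm_num)] with z (hz : 1 < z.re)
    have hz1 : z - 1 ≠ 0 := sub_ne_zero.2 fun h => by simp [h] at hz
    rw [tsum_etaPair_of_one_lt_re hz, dirichletEta,
      riemannZeta_eq_inv_sub_mul (sub_ne_zero.1 hz1)]
    field_simp
  have h := hF.eqOn_of_preconnected_of_eventuallyEq hG (convex_halfSpace_re_gt 0).isPreconnected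
    (show (2 : ℂ) ∈ U by norm_num [U]) hFG hs
  rw [dirichletEta, riemannZeta_eq_inv_sub_mul hs1]
  have hs1' : s - 1 ≠ 0 := sub_ne_zero.2 hs1
  field_simp
  linear_combination h

theorem tendsto_cpow_neg_natCast_add_one {s : ℂ} (hs : 0 < s.re) :
    Tendsto (fun n : ℕ => ((n + 1 : ℕ) : ℂ) ^ (-s)) atTop (𝓝 0) :=
  squeeze_zero_norm (fun n => (norm_natCast_cpow_of_pos n.succ_pos (-s)).le)
    ((tendsto_rpow_neg_atTop hs).comp
      (tendsto_natCast_atTop_atTop.comp (tendsto_add_atTop_nat 1)))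

theorem tendsto_sum_range_neg_one_pow_mul_cpow {s : ℂ} (hs : 0 < s.re) (hs1 : s ≠ 1) :
    Tendsto (fun N => ∑ n ∈ range N, (-1 : ℂ) ^ n * ((n + 1 : ℕ) : ℂ) ^ (-s)) atTop
      (𝓝 (dirichletEta s)) :=
  tendsto_sum_range_neg_one_pow_mul_of_hasSum (tendsto_cpow_neg_natCast_add_one hs)
    (tsum_etaPair hs hs1 ▸ (summable_etaPair hs).hasSum)

theorem two_cpow_conj (s : ℂ) : (2 : ℂ) ^ conj s = conj (2 ^ s) := by
  rw [cpow_conj 2 s (by simp [ofNat_arg, Real.pi_ne_zero.symm]), map_ofNat]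

theorem dirichletEta_conj (s : ℂ) : dirichletEta (conj s) = conj (dirichletEta s) := by
  simp [dirichletEta, ← two_cpow_conj]

theorem ofReal_sq_norm_eq_dirichletEta_mul_conj {s : ℂ} (hs : s.re = 1 / 2) :
    ((‖(1 - 2 ^ s) * riemannZeta s‖ ^ 2 : ℝ) : ℂ) = dirichletEta s * dirichletEta (conj s) := by
  have hconj : 1 - s = conj s :=
    Complex.ext (by simp only [sub_re, one_re, conj_re]; linarith) (by simp)
  have hnorm : ‖(1 - 2 ^ s) * riemannZeta s‖ = ‖dirichletEta s‖ := by
    rw [dirichletEta, hconj, two_cpow_conj, norm_mul, norm_mul, ← norm_conj (1 - conj _),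
      map_sub, map_one, conj_conj]
  rw [hnorm, dirichletEta_conj, mul_conj', ofReal_pow]

theorem ofReal_natCast_mul_cpow (n : ℕ) {y : ℝ} (hy : 0 ≤ y) (c : ℂ) :
    ((n * y : ℝ) : ℂ) ^ c = (n : ℂ) ^ c * (y : ℂ) ^ c := by
  simpa using mul_cpow_ofReal_nonneg n.cast_nonneg hy c

theorem tendsto_cpow_mul_sum_range_alternating_scaled {y : ℝ} (hy : 0 < y) {a b s : ℂ}
    (hab : a + b = -s) (hs : 0 < s.re) (hs1 : s ≠ 1) :
    Tendsto (fun N : ℕ => (y : ℂ) ^ a * ∑ n ∈ range N, (-1 : ℂ) ^ n *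
        ((((n + 1 : ℕ) : ℝ) * y : ℝ) : ℂ) ^ a * ((((n + 1 : ℕ) : ℝ) * y : ℝ) : ℂ) ^ b)
      atTop (𝓝 ((y : ℂ) ^ (a - s) * dirichletEta s)) := by
  have hy0 : (y : ℂ) ≠ 0 := ofReal_ne_zero.2 hy.ne'
  refine ((tendsto_sum_range_neg_one_pow_mul_cpow hs hs1).const_mul _).congr fun N => ?_
  rw [mul_sum, mul_sum]
  refine sum_congr rfl fun n _ => ?_
  have hny : ((((n + 1 : ℕ) : ℝ) * y : ℝ) : ℂ) ≠ 0 := ofReal_ne_zero.2 (by positivity)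
  rw [mul_assoc _ (_ ^ a), ← cpow_add _ _ hny, hab, ofReal_natCast_mul_cpow _ hy.le,
    sub_eq_add_neg, cpow_add _ _ hy0]
  ring

theorem tendsto_cpow_mul_sum_range_alternating_dilated {x : ℝ} (hx : 0 < x) {g : ℝ → ℂ}
    {c d s K : ℂ} (hg : ∀ y : ℝ, 0 < y → g y = (y : ℂ) ^ d * K) (hcd : 1 + c + d = s)
    (hs : 0 < s.re) (hs1 : s ≠ 1) :
    Tendsto (fun N : ℕ => (x : ℂ) ^ c * ∑ m ∈ range N, (-1 : ℂ) ^ m * ((m + 1 : ℕ) : ℂ)⁻¹ *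
        (((x / ((m + 1 : ℕ) : ℝ)) : ℝ) : ℂ) ^ c * g (x / ((m + 1 : ℕ) : ℝ)))
      atTop (𝓝 (K * (x : ℂ) ^ (c + (s - 1)) * dirichletEta s)) := by
  have hx0 : (x : ℂ) ≠ 0 := ofReal_ne_zero.2 hx.ne'
  refine ((tendsto_sum_range_neg_one_pow_mul_cpow hs hs1).const_mul _).congr fun N => ?_
  rw [mul_sum, mul_sum]
  refine sum_congr rfl fun m _ => ?_
  have hm : ((m + 1 : ℕ) : ℂ) ≠ 0 := Nat.cast_ne_zero.2 m.succ_ne_zero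
  have hxm : (0 : ℝ) < x / ((m + 1 : ℕ) : ℝ) := by positivity
  have hdil : (((x / ((m + 1 : ℕ) : ℝ)) : ℝ) : ℂ) ^ (s - 1) =
      (x : ℂ) ^ (s - 1) / ((m + 1 : ℕ) : ℂ) ^ (s - 1) := by
    simpa using div_cpow_ofReal_nonneg hx.le (Nat.cast_nonneg (m + 1)) (s - 1)
  have hpow : ((m + 1 : ℕ) : ℂ) ^ (-s) = ((m + 1 : ℕ) : ℂ)⁻¹ / ((m + 1 : ℕ) : ℂ) ^ (s - 1) := by
    rw [show -s = -1 + -(s - 1) by ring, cpow_add _ _ hm, cpow_neg_one, cpow_neg, div_eq_mul_inv]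
  have hX : (((x / ((m + 1 : ℕ) : ℝ)) : ℝ) : ℂ) ^ c * (((x / ((m + 1 : ℕ) : ℝ)) : ℝ) : ℂ) ^ d =
      (x : ℂ) ^ (s - 1) / ((m + 1 : ℕ) : ℂ) ^ (s - 1) := by
    rw [← cpow_add _ _ (ofReal_ne_zero.2 hxm.ne'), ← hdil, ← hcd]
    congr 1
    ring
  rw [hg _ hxm, hpow, cpow_add _ _ hx0]
  linear_combination (-((x : ℂ) ^ c * (-1) ^ m * ((m + 1 : ℕ) : ℂ)⁻¹ * K)) * hX

theorem Hminus_eigenvalue_excited_general (ω lam : ℝ) (k : ℕ)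
    (ρ : ℝ) (hρ : ρ = k * ω + ω / 2 - lam) (g : ℝ → ℂ)
    (hg : ∀ y : ℝ, 0 < y →
      Filter.Tendsto
        (fun N : ℕ => (y : ℂ) ^ (-(Complex.I * (ω : ℂ)) / 2) *
          ∑ n ∈ Finset.range N, (-1 : ℂ) ^ n *
            ((((n + 1 : ℕ) : ℝ) * y : ℝ) : ℂ) ^ (-(Complex.I * (ω : ℂ)) / 2) *
            ((((n + 1 : ℕ) : ℝ) * y : ℝ) : ℂ) ^ (-(1 / 2 : ℂ) + Complex.I * (ρ : ℂ)))
        Filter.atTop (nhds (g y)))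
    (x : ℝ) (hx : 0 < x) :
    Filter.Tendsto
      (fun N : ℕ => (x : ℂ) ^ (Complex.I * (ω : ℂ) / 2) *
        ∑ m ∈ Finset.range N, (-1 : ℂ) ^ m * ((m + 1 : ℕ) : ℂ)⁻¹ *
          (((x / ((m + 1 : ℕ) : ℝ)) : ℝ) : ℂ) ^ (Complex.I * (ω : ℂ) / 2) *
          g (x / ((m + 1 : ℕ) : ℝ)))
      Filter.atTop
      (nhds (((‖
          (1 - (2 : ℂ) ^ ((1 / 2 : ℂ) - Complex.I * ((k : ℂ) * (ω : ℂ) - (lam : ℂ)))) *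
            riemannZeta ((1 / 2 : ℂ) + Complex.I * ((lam : ℂ) - (k : ℂ) * (ω : ℂ)))‖ ^ 2 : ℝ) : ℂ) *
        (x : ℂ) ^ (-(1 / 2 : ℂ) + Complex.I * (ρ : ℂ)))) := by
  set v : ℂ := 1 / 2 - I * ((k : ℂ) * ω - lam)
  have hv : v.re = 1 / 2 := by simp [v]
  have hv_conj : conj v = 1 / 2 + I * ((k : ℂ) * ω - lam) := by
    simp [v, map_sub, map_natCast, map_ofNat]
  have hv1 : v ≠ 1 := fun h => by norm_num [h] at hv
  have hg_eq : ∀ y : ℝ, 0 < y → g y = (y : ℂ) ^ (-(I * ω) / 2 - v) * dirichletEta v :=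
    fun y hy => tendsto_nhds_unique (hg y hy)
      (tendsto_cpow_mul_sum_range_alternating_scaled hy (by rw [hρ]; push_cast; ring)
        (by norm_num [hv]) hv1)
  have hlim := tendsto_cpow_mul_sum_range_alternating_dilated hx hg_eq (c := I * ω / 2)
    (s := conj v) (by rw [hv_conj]; ring) (by norm_num [hv])
    fun h => hv1 (by simpa using congrArg conj h)
  convert hlim using 2
  rw [show (1 / 2 : ℂ) + I * (lam - k * ω) = v by ring, ofReal_sq_norm_eq_dirichletEta_mul_conj hv,
    mul_right_comm]
  congr 3
  rw [hv_conj, hρ]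
  push_cast
  ring

/-- For `k ≥ 1` and `ρ = kω + ω/2 - λ`, the function `x^{-1/2+iρ}` is an eigenfunction of
`H₋ = A†(ω) A(ω)` with the real nonnegative eigenvalue
`E_k = |(1 - 2^{1/2 - i(kω - λ)}) ζ(1/2 + i(λ - kω))|²`. Here `g = A(ω) x^{-1/2+iρ}` is
defined for `y > 0` as the limit of the partial sums below, and the series defining
`(A†(ω) g)(x)` converges (as the limit of its partial sums) to `E_k · x^{-1/2+iρ}`. -/
theorem Hminus_eigenvalue_excited (ω lam : ℝ) (k : ℕ) (hk : 0 < k)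
    (ρ : ℝ) (hρ : ρ = k * ω + ω / 2 - lam) (g : ℝ → ℂ)
    (hg : ∀ y : ℝ, 0 < y →
      Filter.Tendsto
        (fun N : ℕ => (y : ℂ) ^ (-(Complex.I * (ω : ℂ)) / 2) *
          ∑ n ∈ Finset.range N, (-1 : ℂ) ^ n *
            ((((n + 1 : ℕ) : ℝ) * y : ℝ) : ℂ) ^ (-(Complex.I * (ω : ℂ)) / 2) *
            ((((n + 1 : ℕ) : ℝ) * y : ℝ) : ℂ) ^ (-(1 / 2 : ℂ) + Complex.I * (ρ : ℂ)))
        Filter.atTop (nhds (g y)))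
    (x : ℝ) (hx : 0 < x) :
    Filter.Tendsto
      (fun N : ℕ => (x : ℂ) ^ (Complex.I * (ω : ℂ) / 2) *
        ∑ m ∈ Finset.range N, (-1 : ℂ) ^ m * ((m + 1 : ℕ) : ℂ)⁻¹ *
          (((x / ((m + 1 : ℕ) : ℝ)) : ℝ) : ℂ) ^ (Complex.I * (ω : ℂ) / 2) *
          g (x / ((m + 1 : ℕ) : ℝ)))
      Filter.atTop
      (nhds (((‖
          (1 - (2 : ℂ) ^ ((1 / 2 : ℂ) - Complex.I * ((k : ℂ) * (ω : ℂ) - (lam : ℂ)))) *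
            riemannZeta ((1 / 2 : ℂ) + Complex.I * ((lam : ℂ) - (k : ℂ) * (ω : ℂ)))‖ ^ 2 : ℝ) : ℂ) *
        (x : ℂ) ^ (-(1 / 2 : ℂ) + Complex.I * (ρ : ℂ)))) :=
  Hminus_eigenvalue_excited_general ω lam k ρ hρ g hg x hx
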